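/- arXiv:2106.13481 — 2 statements merged into one kernel-verified Lean document; each statement's English description precedes it below -/
import Mathlib

section
/- For every λ > 0, every real number x, and every integer n ≥ 0, the fully degenerate Bell polynomial satisfies β_{n,λ}(x) = Σ_{k=0}^n S_{2,λ}(n,k) (x)_{k,λ}, where S_{2,λ}(n,k) are the degenerate Stirling numbers of the second kind. -/
/-- The lambda-falling factorial `(x)_{n,lam}`. -/
noncomputable def dffac (lam x : ℝ) (n : ℕ) : ℝ := ∏ i ∈ Finset.range n, (x - i * lam)

/-- The ordinary falling factorial `(x)_n`. -/
noncomputable def ffac (x : ℝ) (n : ℕ) : ℝ := ∏ i ∈ Finset.range n, (x - i)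

/-- The rising factorial. -/
noncomputable def rfac (x : ℝ) (n : ℕ) : ℝ := ∏ i ∈ Finset.range n, (x + i)

/-- The fully degenerate Bell polynomial: n! times the n-th Taylor coefficient at t = 0
of the function t => (1 + lam*((1+lam*t)^(1/lam) - 1))^(x/lam). -/
noncomputable def fdBell (lam x : ℝ) (n : ℕ) : ℝ :=
  iteratedDeriv n (fun t : ℝ => (1 + lam * ((1 + lam * t) ^ (1 / lam) - 1)) ^ (x / lam)) 0

open Finset Filter Nat

private lemma ev_pos' (c : ℝ) : ∀ᶠ t in nhds (0:ℝ), 0 < 1 + c * t := by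
  have hc : ContinuousAt (fun t : ℝ => 1 + c * t) 0 := by fun_prop
  have h0 : (0:ℝ) < 1 + c * 0 := by norm_num
  exact hc.eventually (eventually_gt_nhds h0)

private lemma iterDeriv_aff_rpow (c : ℝ) : ∀ (n : ℕ) (a β : ℝ),
    iteratedDeriv n (fun t : ℝ => a * (1 + c * t) ^ β) 0
      = a * c ^ n * ∏ i ∈ Finset.range n, (β - i) := by
  intro n
  induction n with
  | zero => intro a β; simp [Real.one_rpow]
  | succ n ih =>
    intro a β
    rw [iteratedDeriv_succ']
    have hev : deriv (fun t : ℝ => a * (1 + c * t) ^ β)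
        =ᶠ[nhds (0:ℝ)] (fun t : ℝ => (a * c * β) * (1 + c * t) ^ (β - 1)) := by
      filter_upwards [ev_pos' c] with t ht
      have h1 : HasDerivAt (fun t : ℝ => 1 + c * t) c t := by
        simpa using ((hasDerivAt_id t).const_mul c).const_add 1
      have h2 := (h1.rpow_const (p := β) (Or.inl (ne_of_gt ht))).const_mul a
      rw [h2.deriv]; ring
    rw [hev.iteratedDeriv_eq n, ih (a * c * β) (β - 1), Finset.prod_range_succ']
    have hprod : (∏ i ∈ Finset.range n, (β - 1 - (i:ℝ)))
        = ∏ i ∈ Finset.range n, (β - ((i+1 : ℕ) : ℝ)) :=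
      Finset.prod_congr rfl (fun i _ => by push_cast; ring)
    rw [hprod]
    push_cast
    ring

private lemma iterDeriv_rpow (c β : ℝ) (n : ℕ) :
    iteratedDeriv n (fun t : ℝ => (1 + c * t) ^ β) 0
      = c ^ n * ∏ i ∈ Finset.range n, (β - i) := by
  have h := iterDeriv_aff_rpow c n 1 β
  simpa using h

private lemma coeff_eq' {f : ℝ → ℝ} {q : FormalMultilinearSeries ℝ ℝ ℝ} {x : ℝ}
    (hq : HasFPowerSeriesAt f q x) (k : ℕ) :
    q.coeff k = iteratedDeriv k f x / k ! := by
  obtain ⟨r, hr⟩ := hq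
  have h := hr.factorial_smul (1:ℝ) k
  rw [iteratedDeriv_eq_iteratedFDeriv]
  have hc : q k (fun _ => (1:ℝ)) = q.coeff k := rfl
  rw [hc, nsmul_eq_mul] at h
  field_simp [← h]
  linarith

private lemma comp_coeff' (q p : FormalMultilinearSeries ℝ ℝ ℝ) (n : ℕ) :
    (q.comp p).coeff n
      = ∑ c : Composition n, q.coeff c.length * ∏ i, p.coeff (c.blocksFun i) := by
  have h0 : (q.comp p).coeff n = (q.comp p) n (fun _ => 1) := rfl
  rw [h0]
  show (∑ c : Composition n, q.compAlongComposition p c) (fun _ => 1) = _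
  rw [ContinuousMultilinearMap.sum_apply]
  apply Finset.sum_congr rfl
  intro c _
  rw [FormalMultilinearSeries.compAlongComposition_apply]
  have hv : (p.applyComposition c fun _ => (1:ℝ))
      = fun i => (p.coeff (c.blocksFun i)) • (fun _ : Fin c.length => (1:ℝ)) i := by
    funext i
    show p (c.blocksFun i) (fun _ => 1) = _
    simp only [smul_eq_mul, mul_one]
    rfl
  rw [hv, ContinuousMultilinearMap.map_smul_univ, smul_eq_mul,
    show (q c.length fun _ => (1:ℝ)) = q.coeff c.length from rfl]
  ring

private lemma analyticAt_rlog {x : ℝ} (hx : 0 < x) : AnalyticAt ℝ Real.log x := by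
  have h1 : AnalyticAt ℝ (fun y : ℝ => (Complex.log (y : ℂ)).re) x := by
    have h2 : AnalyticAt ℝ Complex.log ((x : ℂ)) :=
      (analyticAt_clog (by simp [Complex.mem_slitPlane_iff, hx])).restrictScalars
    have h3 : AnalyticAt ℝ (fun y : ℝ => Complex.log (y : ℂ)) x :=
      h2.comp (Complex.ofRealCLM.analyticAt x)
    exact (Complex.reCLM.analyticAt _).comp h3
  apply h1.congr
  filter_upwards with y
  exact Complex.log_ofReal_re y

private lemma analyticAt_one_add_rpow (c β : ℝ) :
    AnalyticAt ℝ (fun s : ℝ => (1 + c * s) ^ β) 0 := by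
  have hbase : AnalyticAt ℝ (fun s : ℝ => 1 + c * s) 0 :=
    analyticAt_const.add (analyticAt_const.mul (analyticAt_id))
  have hlog : AnalyticAt ℝ (fun s : ℝ => Real.log (1 + c * s)) 0 := by
    apply AnalyticAt.comp (g := Real.log) _ hbase
    simpa using analyticAt_rlog (x := 1 + c * 0) (by norm_num)
  have hexp : AnalyticAt ℝ (fun s : ℝ => Real.exp (Real.log (1 + c * s) * β)) 0 :=
    (hlog.mul analyticAt_const).rexp
  apply hexp.congr
  filter_upwards [ev_pos' c] with t ht
  rw [Real.rpow_def_of_pos ht]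

private lemma ffac_nat_self (m : ℕ) : ffac (m:ℝ) m = m ! := by
  induction m with
  | zero => simp [ffac]
  | succ m ih =>
    rw [ffac, Finset.prod_range_succ']
    have h1 : (∏ i ∈ Finset.range m, (((m+1:ℕ):ℝ) - ((i+1:ℕ):ℝ)))
        = ∏ i ∈ Finset.range m, ((m:ℝ) - i) :=
      Finset.prod_congr rfl (fun i _ => by push_cast; ring)
    rw [h1]
    rw [ffac] at ih
    rw [ih]
    push_cast [Nat.factorial_succ]
    ring

private lemma ffac_nat_zero {m k : ℕ} (h : m < k) : ffac (m:ℝ) k = 0 := by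
  apply Finset.prod_eq_zero (Finset.mem_range.mpr h)
  simp

private lemma prod_scale {lam : ℝ} (hlam : lam ≠ 0) (y : ℝ) (k : ℕ) :
    lam ^ k * ∏ i ∈ Finset.range k, (y / lam - i) = dffac lam y k := by
  rw [dffac,
    show lam ^ k = ∏ _i ∈ Finset.range k, lam from by
      rw [Finset.prod_const, Finset.card_range],
    ← Finset.prod_mul_distrib]
  apply Finset.prod_congr rfl
  intro i _
  field_simp

private lemma tri_lemma (n : ℕ) (B C : ℕ → ℝ)
    (h : ∀ m : ℕ, ∑ k ∈ Finset.range (n+1), ffac (m:ℝ) k * B k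
        = ∑ k ∈ Finset.range (n+1), ffac (m:ℝ) k * C k) :
    ∀ m, m ≤ n → B m = C m := by
  intro m
  induction m using Nat.strong_induction_on with
  | _ m ih =>
    intro hm
    have hsum : ∑ k ∈ Finset.range (n+1), ffac (m:ℝ) k * (B k - C k) = 0 := by
      simp only [mul_sub, Finset.sum_sub_distrib]
      rw [h m, sub_self]
    have hsingle : ∑ k ∈ Finset.range (n+1), ffac (m:ℝ) k * (B k - C k)
        = ffac (m:ℝ) m * (B m - C m) := by
      apply Finset.sum_eq_single m
      · intro b hb hbm
        rcases lt_or_gt_of_ne hbm with hlt | hgt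
        · rw [ih b hlt (by omega), sub_self, mul_zero]
        · rw [ffac_nat_zero hgt, zero_mul]
      · intro hmem; exact absurd (Finset.mem_range.mpr (by omega)) hmem
    rw [hsingle, ffac_nat_self] at hsum
    have hf : ((m ! : ℕ) : ℝ) ≠ 0 := Nat.cast_ne_zero.mpr (Nat.factorial_ne_zero m)
    have := (mul_eq_zero.mp hsum).resolve_left hf
    linarith

theorem stmt_1 (lam : ℝ) (hlam : 0 < lam) (S2 : ℕ → ℕ → ℝ)
    (hS2 : ∀ (n : ℕ) (x : ℝ),
      dffac lam x n = ∑ l ∈ Finset.range (n + 1), S2 n l * ffac x l)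
    (x : ℝ) (n : ℕ) :
    fdBell lam x n = ∑ k ∈ Finset.range (n + 1), S2 n k * dffac lam x k := by
  have hlam0 : lam ≠ 0 := ne_of_gt hlam
  have hn0 : ((n ! : ℕ) : ℝ) ≠ 0 := Nat.cast_ne_zero.mpr (Nat.factorial_ne_zero n)
  set h : ℝ → ℝ := fun t => (1 + lam * t) ^ (1 / lam) - 1 with hdef
  have hh_an : AnalyticAt ℝ h 0 :=
    (analyticAt_one_add_rpow lam (1/lam)).sub analyticAt_const
  obtain ⟨p, hp⟩ := hh_an
  have hh0 : h 0 = 0 := by simp [hdef, Real.one_rpow]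
  set A : ℕ → ℝ := fun k => ∑ c ∈ Finset.univ.filter (fun c : Composition n => c.length = k),
      ∏ i, p.coeff (c.blocksFun i) with hA
  have key : ∀ gg : ℝ → ℝ, ∀ q : FormalMultilinearSeries ℝ ℝ ℝ, HasFPowerSeriesAt gg q 0 →
      iteratedDeriv n (fun t => gg (h t)) 0
        = n ! * ∑ k ∈ Finset.range (n+1), (iteratedDeriv k gg 0 / k !) * A k := by
    intro gg q hq
    have hq0 : HasFPowerSeriesAt gg q (h 0) := by rw [hh0]; exact hq
    have hcomp := hq0.comp hp
    have h1 := coeff_eq' hcomp n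
    have h2 := comp_coeff' q p n
    have h3 : (∑ c : Composition n, q.coeff c.length * ∏ i, p.coeff (c.blocksFun i))
        = ∑ k ∈ Finset.range (n+1), q.coeff k * A k := by
      rw [← Finset.sum_fiberwise_of_maps_to
        (fun c _ => Finset.mem_range.mpr (Nat.lt_succ_of_le c.length_le))
        (fun c : Composition n => q.coeff c.length * ∏ i, p.coeff (c.blocksFun i))]
      apply Finset.sum_congr rfl
      intro k _
      rw [hA, Finset.mul_sum]
      apply Finset.sum_congr rfl
      intro c hc
      rw [show q.coeff c.length = q.coeff k from by rw [(Finset.mem_filter.mp hc).2]]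
    have h4 : ∀ k, q.coeff k = iteratedDeriv k gg 0 / k ! := coeff_eq' hq
    have h6 : iteratedDeriv n (gg ∘ h) 0 = n ! * (q.comp p).coeff n := by
      rw [h1]; field_simp
    have h5 : iteratedDeriv n (fun t => gg (h t)) 0 = iteratedDeriv n (gg ∘ h) 0 := rfl
    rw [h5, h6, h2, h3]
    congr 1
    exact Finset.sum_congr rfl (fun k _ => by rw [h4])
  -- outer function for the Bell polynomial
  obtain ⟨qG, hqG⟩ := analyticAt_one_add_rpow lam (x / lam)
  have hGcoeff : ∀ k : ℕ, iteratedDeriv k (fun s : ℝ => (1 + lam * s) ^ (x / lam)) 0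
      = dffac lam x k := by
    intro k; rw [iterDeriv_rpow]; exact prod_scale hlam0 x k
  have hGid : fdBell lam x n
      = iteratedDeriv n (fun t => (fun s : ℝ => (1 + lam * s) ^ (x / lam)) (h t)) 0 := rfl
  have hG : fdBell lam x n = n ! * ∑ k ∈ Finset.range (n+1), (dffac lam x k / k !) * A k := by
    rw [hGid, key _ qG hqG]
    congr 1
    exact Finset.sum_congr rfl (fun k _ => by rw [hGcoeff])
  -- the integer-power compositions
  have hm : ∀ m : ℕ, dffac lam (m:ℝ) n
      = n ! * ∑ k ∈ Finset.range (n+1), (ffac (m:ℝ) k / k !) * A k := by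
    intro m
    obtain ⟨qm, hqm⟩ := analyticAt_one_add_rpow 1 ((m:ℝ))
    have h1 := key _ qm hqm
    have hcoef : ∀ k, iteratedDeriv k (fun s : ℝ => (1 + 1 * s) ^ ((m:ℝ))) 0 = ffac (m:ℝ) k := by
      intro k; rw [iterDeriv_rpow]; simp [ffac]
    have hev : (fun t => (fun s : ℝ => (1 + 1 * s) ^ ((m:ℝ))) (h t))
        =ᶠ[nhds (0:ℝ)] (fun t : ℝ => (1 + lam * t) ^ ((m:ℝ) / lam)) := by
      filter_upwards [ev_pos' lam] with t ht
      show (1 + 1 * ((1 + lam * t) ^ (1/lam) - 1)) ^ ((m:ℝ)) = _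
      rw [one_mul]
      have e1 : 1 + ((1 + lam * t) ^ (1/lam) - 1) = (1 + lam * t) ^ (1/lam) := by ring
      rw [e1, ← Real.rpow_mul (le_of_lt ht)]
      have e2 : 1 / lam * (m:ℝ) = (m:ℝ) / lam := by ring
      rw [e2]
    have h2 : iteratedDeriv n (fun t => (fun s : ℝ => (1 + 1 * s) ^ ((m:ℝ))) (h t)) 0
        = iteratedDeriv n (fun t : ℝ => (1 + lam * t) ^ ((m:ℝ) / lam)) 0 :=
      hev.iteratedDeriv_eq n
    have h3 : iteratedDeriv n (fun t : ℝ => (1 + lam * t) ^ ((m:ℝ) / lam)) 0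
        = dffac lam (m:ℝ) n := by
      rw [iterDeriv_rpow]; exact prod_scale hlam0 _ n
    rw [← h3, ← h2, h1]
    congr 1
    exact Finset.sum_congr rfl (fun k _ => by rw [hcoef])
  -- triangular identification
  have htri : ∀ k, k ≤ n → ((n ! : ℕ) : ℝ) * A k / k ! = S2 n k := by
    apply tri_lemma n (fun k => ((n ! : ℕ) : ℝ) * A k / k !) (fun k => S2 n k)
    intro m
    have e1 : ∑ k ∈ Finset.range (n+1), ffac (m:ℝ) k * (((n ! : ℕ) : ℝ) * A k / k !)
        = (n ! : ℝ) * ∑ k ∈ Finset.range (n+1), (ffac (m:ℝ) k / k !) * A k := by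
      rw [Finset.mul_sum]
      apply Finset.sum_congr rfl
      intro k _
      have hk0 : ((k ! : ℕ) : ℝ) ≠ 0 := Nat.cast_ne_zero.mpr (Nat.factorial_ne_zero k)
      field_simp
    rw [e1, ← hm m, hS2 n (m:ℝ)]
    exact Finset.sum_congr rfl (fun k _ => by ring)
  rw [hG, Finset.mul_sum]
  apply Finset.sum_congr rfl
  intro k hk
  have hk0 : ((k ! : ℕ) : ℝ) ≠ 0 := Nat.cast_ne_zero.mpr (Nat.factorial_ne_zero k)
  rw [← htri k (by exact Nat.lt_succ_iff.mp (Finset.mem_range.mp hk))]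
  field_simp
end

section
/- Let λ > 0, α > 0 with λα < 1, and let X ∼ Poi_λ(α) be the degenerate Poisson random variable with parameter α. Then for every integer m ≥ 0, the falling factorial moment satisfies E[(X)_m] = α^m (1)_{m,λ} / (1+λα)^m. -/
/-- Expectation of `f(X)` for the degenerate Poisson random variable `X ~ Poi_lam(a)`. -/
noncomputable def degPoiE (lam a : ℝ) (f : ℕ → ℝ) : ℝ :=
  (1 + lam * a) ^ (-(1 / lam)) * ∑' i : ℕ, f i * dffac lam 1 i * a ^ i / (i.factorial : ℝ)


lemma ffac_succ (x : ℝ) (n : ℕ) : ffac x (n + 1) = ffac x n * (x - n) :=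
  Finset.prod_range_succ _ _

noncomputable def bc (x : ℝ) (j : ℕ) : ℝ := ffac x j / j.factorial

lemma bc_zero (x : ℝ) : bc x 0 = 1 := by simp [bc, ffac]

lemma bc_succ (x : ℝ) (j : ℕ) : bc x (j + 1) * (j + 1) = bc x j * (x - j) := by
  have h2 : (j.factorial : ℝ) ≠ 0 := Nat.cast_ne_zero.2 j.factorial_ne_zero
  have h3 : ((j:ℝ) + 1) ≠ 0 := by positivity
  rw [bc, bc, ffac_succ, Nat.factorial_succ]
  push_cast
  field_simp

lemma bc_bound (x : ℝ) (j : ℕ) : |bc x j| ≤ ((j : ℝ) + 1) ^ (⌈|x|⌉₊) := by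
  set s := ⌈|x|⌉₊ with hs
  induction j with
  | zero => simp [bc_zero]
  | succ j ih =>
    have hj1 : (0:ℝ) < (j:ℝ) + 1 := by positivity
    have heq : |bc x (j+1)| * ((j:ℝ) + 1) = |bc x j| * |x - j| := by
      rw [← abs_of_pos hj1, ← abs_mul, bc_succ, abs_mul]
    have hxj : |x - j| ≤ (s : ℝ) + j := by
      have h1 : |x| ≤ (s : ℝ) := Nat.le_ceil |x|
      have h3 : |x - (j:ℝ)| ≤ |x| + |(j:ℝ)| := abs_sub _ _
      have h4 : |(j:ℝ)| = (j:ℝ) := abs_of_nonneg (by positivity)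
      linarith
    have h1 : (1:ℝ) + 1/((j:ℝ)+1) = ((j:ℝ)+2)/((j:ℝ)+1) := by field_simp; ring
    have hpos : (0:ℝ) < 1/((j:ℝ)+1) := by positivity
    have hber : 1 + (s:ℝ) * (1/((j:ℝ)+1)) ≤ (((j:ℝ)+2)/((j:ℝ)+1))^s := by
      rw [← h1]; exact one_add_mul_le_pow (by linarith) s
    have h2 : ((j:ℝ)+1)^s * (((j:ℝ)+2)/((j:ℝ)+1))^s = ((j:ℝ)+2)^s := by
      rw [div_pow]; field_simp
    have hkey : ((j:ℝ)+1)^s * ((s:ℝ)+(j:ℝ)) ≤ ((j:ℝ)+1) * ((j:ℝ)+2)^s := by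
      calc ((j:ℝ)+1)^s * ((s:ℝ)+(j:ℝ))
          ≤ ((j:ℝ)+1)^s * (((j:ℝ)+1) * (1 + (s:ℝ) * (1/((j:ℝ)+1)))) := by
            apply mul_le_mul_of_nonneg_left _ (by positivity)
            have h5 : ((j:ℝ)+1) * ((s:ℝ) * (1/((j:ℝ)+1))) = (s:ℝ) := by field_simp
            rw [mul_add, mul_one, h5]; linarith
        _ ≤ ((j:ℝ)+1)^s * (((j:ℝ)+1) * (((j:ℝ)+2)/((j:ℝ)+1))^s) := by
            apply mul_le_mul_of_nonneg_left _ (by positivity)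
            exact mul_le_mul_of_nonneg_left hber (by positivity)
        _ = ((j:ℝ)+1) * ((j:ℝ)+2)^s := by rw [← h2]; ring
    have hfin : |bc x (j+1)| * ((j:ℝ)+1) ≤ ((j:ℝ)+2)^s * ((j:ℝ)+1) := by
      rw [heq]
      calc |bc x j| * |x - j| ≤ (((j:ℝ)+1)^s) * ((s:ℝ)+(j:ℝ)) :=
            mul_le_mul ih hxj (abs_nonneg _) (by positivity)
        _ ≤ ((j:ℝ)+1) * ((j:ℝ)+2)^s := hkey
        _ = ((j:ℝ)+2)^s * ((j:ℝ)+1) := by ring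
    have := le_of_mul_le_mul_right hfin hj1
    push_cast
    convert this using 2
    · rfl
    ring

lemma summable_aux (k : ℕ) {b : ℝ} (hb0 : 0 < b) (hb1 : b < 1) :
    Summable (fun j : ℕ => ((j:ℝ)+1)^k * b^j) := by
  have h : Summable (fun n : ℕ => (n : ℝ) ^ k * b ^ n) :=
    summable_pow_mul_geometric_of_norm_lt_one k (by rwa [Real.norm_eq_abs, abs_of_pos hb0])
  have h2 : Summable (fun j : ℕ => ((j+1 : ℕ) : ℝ) ^ k * b ^ (j+1)) :=
    h.comp_injective Nat.succ_injective
  refine (h2.mul_left b⁻¹).congr fun j => ?_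
  push_cast
  rw [pow_succ]
  field_simp

lemma binomial_hasSum (x : ℝ) {z : ℝ} (hz0 : 0 ≤ z) (hz1 : z < 1) :
    HasSum (fun j : ℕ => bc x j * z ^ j) ((1 + z) ^ x) := by
  set s := ⌈|x|⌉₊ with hs
  set b : ℝ := (1 + z) / 2 with hb
  have hb0 : 0 < b := by rw [hb]; linarith
  have hb1 : b < 1 := by rw [hb]; linarith
  have hzb : z < b := by rw [hb]; linarith
  set t : Set ℝ := Set.Ioo (-b) b with ht_def
  have ht : IsOpen t := isOpen_Ioo
  have h't : IsPreconnected t := (convex_Ioo _ _).isPreconnected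
  have h0t : (0:ℝ) ∈ t := ⟨by linarith, hb0⟩
  have hzt : z ∈ t := ⟨by linarith, hzb⟩
  set u : ℕ → ℝ := fun j => b⁻¹ * (((j:ℝ)+1)^(s+1) * b ^ j) with hu
  have hu_sum : Summable u := (summable_aux (s+1) hb0 hb1).mul_left _
  set g : ℕ → ℝ → ℝ := fun j y => bc x j * y ^ j with hg
  set g' : ℕ → ℝ → ℝ := fun j y => bc x j * ((j:ℝ) * y ^ (j-1)) with hg'
  have hgderiv : ∀ j y, HasDerivAt (g j) (g' j y) y := fun j y =>
    (hasDerivAt_pow j y).const_mul _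
  have hbound : ∀ j y, y ∈ t → ‖g' j y‖ ≤ u j := by
    intro j y hy
    have hyb : |y| ≤ b := by
      rw [abs_le]; exact ⟨hy.1.le, hy.2.le⟩
    have habs : ‖g' j y‖ ≤ |bc x j| * ((j:ℝ) * b ^ (j-1)) := by
      calc ‖g' j y‖ = |bc x j| * ((j:ℝ) * |y| ^ (j-1)) := by
            simp only [hg', Real.norm_eq_abs, abs_mul, abs_pow, Nat.abs_cast]
        _ ≤ |bc x j| * ((j:ℝ) * b ^ (j-1)) := by
            exact mul_le_mul_of_nonneg_left (mul_le_mul_of_nonneg_left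
              (pow_le_pow_left₀ (abs_nonneg y) hyb _) (by positivity)) (abs_nonneg _)
    refine habs.trans ?_
    rcases j with _ | k
    · simp [hu]
      positivity
    · have hueq : u (k+1) = ((k:ℝ)+2)^(s+1) * b^k := by
        rw [hu]
        push_cast
        rw [pow_succ]
        field_simp
        ring
      have hbc : |bc x (k+1)| ≤ ((k:ℝ)+2)^s := by
        have := bc_bound x (k+1)
        push_cast at this ⊢
        convert this using 2
        ring
      rw [hueq]
      simp only [Nat.add_sub_cancel]
      calc |bc x (k+1)| * ((((k+1:ℕ)):ℝ) * b ^ k) ≤ ((k:ℝ)+2)^s * (((k:ℝ)+2) * b ^ k) := by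
            push_cast
            gcongr
            · linarith
        _ = ((k:ℝ)+2)^(s+1) * b^k := by rw [pow_succ]; ring
  have hg0 : Summable (fun j => g j (0:ℝ)) := by
    apply summable_of_ne_finset_zero (s := {0})
    intro j hj
    simp only [Finset.mem_singleton] at hj
    simp [hg, zero_pow hj]
  have hG : ∀ y ∈ t, HasDerivAt (fun w => ∑' j, g j w) (∑' j, g' j y) y := fun y hy =>
    hasDerivAt_tsum_of_isPreconnected hu_sum ht h't (fun j y _ => hgderiv j y) hbound h0t hg0 hy
  set G : ℝ → ℝ := fun w => ∑' j, g j w with hGdef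
  set D : ℝ → ℝ := fun y => ∑' j, g' j y with hDdef
  have hSg' : ∀ y ∈ t, Summable (fun j => g' j y) := fun y hy =>
    Summable.of_norm_bounded hu_sum (fun j => hbound j y hy)
  have hSg : ∀ y ∈ t, Summable (fun j => g j y) := by
    intro y hy
    have hyb : |y| ≤ b := by rw [abs_le]; exact ⟨hy.1.le, hy.2.le⟩
    apply Summable.of_norm_bounded (summable_aux s hb0 hb1)
    intro j
    calc ‖g j y‖ = |bc x j| * |y| ^ j := by
          simp only [hg, Real.norm_eq_abs, abs_mul, abs_pow]
      _ ≤ ((j:ℝ)+1)^s * b ^ j :=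
          mul_le_mul (bc_bound x j) (pow_le_pow_left₀ (abs_nonneg y) hyb _)
            (by positivity) (by positivity)
  have key : ∀ y ∈ t, (1+y) * D y = x * G y := by
    intro y hy
    have hA := hSg' y hy
    have hS1 : Summable (fun j => g' (j+1) y) := hA.comp_injective Nat.succ_injective
    have hA1eq : ∀ j : ℕ, g' (j+1) y = bc x j * (x - j) * y ^ j := by
      intro j
      have : g' (j+1) y = (bc x (j+1) * ((j:ℝ)+1)) * y ^ j := by
        simp only [hg', Nat.add_sub_cancel]
        push_cast
        ring
      rw [this, bc_succ]
    have hD_shift : D y = ∑' j, bc x j * (x - j) * y ^ j := by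
      have hDy : D y = ∑' j, g' j y := rfl
      have hg'0 : g' 0 y = 0 := by simp [hg']
      rw [hDy, hA.tsum_eq_zero_add, hg'0, zero_add]
      exact tsum_congr hA1eq
    have hS1' : Summable (fun j => bc x j * (x - j) * y ^ j) := hS1.congr hA1eq
    have hS2eq : ∀ j : ℕ, y * g' j y = bc x j * (j:ℝ) * y ^ j := by
      intro j
      rcases j with _ | k
      · simp [hg']
      · simp only [hg', Nat.add_sub_cancel]
        push_cast
        ring
    have hS2 : Summable (fun j => bc x j * (j:ℝ) * y ^ j) := (hA.mul_left y).congr hS2eq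
    have hyD : y * D y = ∑' j, bc x j * (j:ℝ) * y ^ j := by
      have hDy : y * D y = y * ∑' j, g' j y := rfl
      rw [hDy, ← tsum_mul_left]
      exact tsum_congr hS2eq
    have hsum_eq : ∀ j : ℕ, bc x j * (x - j) * y ^ j + bc x j * (j:ℝ) * y ^ j
        = x * (bc x j * y ^ j) := fun j => by ring
    calc (1+y) * D y = D y + y * D y := by ring
      _ = (∑' j, bc x j * (x - j) * y ^ j) + ∑' j, bc x j * (j:ℝ) * y ^ j := by
          rw [hyD, hD_shift]
      _ = ∑' j, (bc x j * (x - j) * y ^ j + bc x j * (j:ℝ) * y ^ j) :=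
          (Summable.tsum_add hS1' hS2).symm
      _ = ∑' j, x * (bc x j * y ^ j) := tsum_congr hsum_eq
      _ = x * G y := tsum_mul_left
  set φ : ℝ → ℝ := fun y => G y * (1+y) ^ (-x) with hφdef
  have hφ : ∀ y ∈ t, HasDerivAt φ 0 y := by
    intro y hy
    have hy1 : (0:ℝ) < 1 + y := by
      have := hy.1
      simp only [ht_def, Set.mem_Ioo] at hy
      linarith [hy.1, hb1]
    have hrp : HasDerivAt (fun w : ℝ => (1+w) ^ (-x)) (-x * (1+y)^(-x-1)) y := by
      have h := Real.hasDerivAt_rpow_const (x := 1+y) (p := -x) (Or.inl (ne_of_gt hy1))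
      have hid : HasDerivAt (fun w : ℝ => 1 + w) 1 y := by
        simpa using (hasDerivAt_id y).const_add (1:ℝ)
      exact (h.comp y hid).congr_deriv (mul_one _)
    have hmul := (hG y hy).mul hrp
    have hval : D y * (1+y)^(-x) + G y * (-x * (1+y)^(-x-1)) = 0 := by
      have hkey := key y hy
      have hpow : (1+y:ℝ)^(-x) = (1+y)^(-x-1) * (1+y) := by
        have h := Real.rpow_add hy1 (-x-1) 1
        rw [Real.rpow_one] at h
        rw [← h]
        congr 1
        ring
      rw [hpow]
      linear_combination ((1+y:ℝ)^(-x-1)) * hkey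
    have : (fun w => G w * (1+w) ^ (-x)) = φ := rfl
    change HasDerivAt φ _ y at hmul
    rw [show (0:ℝ) = D y * (1+y)^(-x) + G y * (-x * (1+y)^(-x-1)) from hval.symm]
    exact hmul
  have hsubset : Set.Icc (0:ℝ) z ⊆ t := by
    intro w hw
    exact ⟨by linarith [hw.1], by linarith [hw.2]⟩
  have hconst := constant_of_has_deriv_right_zero
    (f := φ) (a := 0) (b := z)
    (fun w hw => ((hφ w (hsubset hw)).continuousAt).continuousWithinAt)
    (fun w hw => (hφ w (hsubset (Set.Ico_subset_Icc_self hw))).hasDerivWithinAt)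
    z ⟨hz0, le_refl z⟩
  have hG0 : G 0 = 1 := by
    have h : G 0 = ∑' j, g j 0 := rfl
    rw [h, tsum_eq_single 0 (fun j hj => by simp [hg, zero_pow hj])]
    simp [hg, bc_zero]
  have hφ0 : φ 0 = 1 := by
    show G 0 * (1+(0:ℝ)) ^ (-x) = 1
    rw [hG0]
    simp
  rw [hφ0] at hconst
  have h1z : (0:ℝ) < 1 + z := by linarith
  have hGz : G z = (1+z) ^ x := by
    have h2 : ((1+z):ℝ)^(-x) * ((1+z):ℝ)^x = 1 := by
      rw [← Real.rpow_add h1z]; simp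
    have hφz : G z * (1+z)^(-x) = 1 := hconst
    calc G z = G z * (((1+z):ℝ)^(-x) * ((1+z):ℝ)^x) := by rw [h2, mul_one]
      _ = (G z * (1+z)^(-x)) * (1+z)^x := by ring
      _ = (1+z)^x := by rw [hφz, one_mul]
  have hsum := (hSg z hzt).hasSum
  have heq : (∑' j, g j z) = G z := rfl
  rw [heq, hGz] at hsum
  exact hsum

lemma dffac_eq (lam x : ℝ) (hlam : lam ≠ 0) (n : ℕ) :
    dffac lam x n = lam ^ n * ffac (x / lam) n := by
  have h : ∀ i ∈ Finset.range n, x - (i:ℝ) * lam = lam * (x / lam - i) := by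
    intro i _
    field_simp
  rw [dffac, Finset.prod_congr rfl h, Finset.prod_mul_distrib, Finset.prod_const,
    Finset.card_range, ffac]

lemma ffac_nat_fac (m j : ℕ) :
    ffac ((m + j : ℕ) : ℝ) m * (j.factorial : ℝ) = ((m + j).factorial : ℝ) := by
  induction m generalizing j with
  | zero => simp [ffac]
  | succ m ih =>
    have h1 : (m + 1 + j) = (m + (j + 1)) := by ring
    have h2 := ih (j + 1)
    rw [ffac_succ]
    have h3 : ((m + 1 + j : ℕ) : ℝ) - (m : ℕ) = (j : ℝ) + 1 := by push_cast; ring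
    have h4 : ffac ((m + 1 + j : ℕ) : ℝ) m = ffac ((m + (j + 1) : ℕ) : ℝ) m := by rw [h1]
    rw [h3, h4]
    have h5 : ((j + 1).factorial : ℝ) = ((j:ℝ) + 1) * (j.factorial : ℝ) := by
      rw [Nat.factorial_succ]; push_cast; ring
    calc ffac ((m + (j+1) : ℕ) : ℝ) m * ((j:ℝ) + 1) * (j.factorial : ℝ)
        = ffac ((m + (j+1) : ℕ) : ℝ) m * ((j+1).factorial : ℝ) := by rw [h5]; ring
      _ = ((m + (j+1)).factorial : ℝ) := h2
      _ = ((m + 1 + j).factorial : ℝ) := by rw [h1]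

theorem stmt_5 (lam a : ℝ) (hlam : 0 < lam) (ha : 0 < a) (hla : lam * a < 1) (m : ℕ) :
    degPoiE lam a (fun i => ffac (i : ℝ) m) =
      a ^ m * dffac lam 1 m / (1 + lam * a) ^ m := by
  have hlam0 : lam ≠ 0 := ne_of_gt hlam
  set z : ℝ := lam * a with hz
  have hz0 : 0 ≤ z := by positivity
  have h1z : (0:ℝ) < 1 + z := by linarith
  set r : ℝ := 1 / lam with hr
  set f : ℕ → ℝ := fun i => ffac (i : ℝ) m * dffac lam 1 i * a ^ i / (i.factorial : ℝ) with hf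
  -- terms below m vanish
  have hvanish : ∀ i ∈ Finset.range m, f i = 0 := by
    intro i hi
    have : ffac ((i:ℝ)) m = 0 :=
      Finset.prod_eq_zero hi (by simp)
    simp [hf, this]
  -- the shifted sum
  have hpoint : ∀ j : ℕ, f (j + m) =
      (dffac lam 1 m * a ^ m) * (bc (r - m) j * z ^ j) := by
    intro j
    have hjm : j + m = m + j := by ring
    have hffac : ffac ((m + j : ℕ) : ℝ) m = ((m + j).factorial : ℝ) / (j.factorial : ℝ) := by
      rw [← ffac_nat_fac m j]
      field_simp
    have hd : dffac lam 1 (m + j) = dffac lam 1 m * dffac lam (1 - m * lam) j := by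
      rw [dffac, dffac, dffac, Finset.prod_range_add]
      congr 1
      refine Finset.prod_congr rfl fun i _ => ?_
      push_cast
      ring
    have hd2 : dffac lam (1 - m * lam) j = lam ^ j * ffac (r - m) j := by
      have he : (1 - (m:ℝ) * lam) / lam = r - m := by
        rw [hr]
        field_simp
      rw [dffac_eq lam _ hlam0, he]
    have hfac_ne : ((m + j).factorial : ℝ) ≠ 0 := Nat.cast_ne_zero.2 (Nat.factorial_ne_zero _)
    have hjfac_ne : ((j).factorial : ℝ) ≠ 0 := Nat.cast_ne_zero.2 (Nat.factorial_ne_zero _)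
    rw [hf]
    simp only [hjm]
    rw [hffac, hd, hd2, bc]
    rw [pow_add]
    field_simp
    ring
  have hbin := binomial_hasSum (r - m) hz0 hla
  have hshift : HasSum (fun j => f (j + m))
      ((dffac lam 1 m * a ^ m) * (1 + z) ^ (r - m)) := by
    have hfn : (fun j => f (j + m)) =
        fun j => (dffac lam 1 m * a ^ m) * (bc (r - m) j * z ^ j) := funext hpoint
    rw [hfn]
    exact hbin.mul_left _
  have hfull := (hasSum_nat_add_iff m).1 hshift
  have hsum0 : ∑ i ∈ Finset.range m, f i = 0 := Finset.sum_eq_zero hvanish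
  rw [hsum0, add_zero] at hfull
  have htsum : ∑' i, f i = (dffac lam 1 m * a ^ m) * (1 + z) ^ (r - m) := hfull.tsum_eq
  rw [degPoiE]
  have hts : (∑' i : ℕ, (fun i => ffac (i:ℝ) m) i * dffac lam 1 i * a ^ i / (i.factorial : ℝ))
      = (dffac lam 1 m * a ^ m) * (1 + z) ^ (r - m) := htsum
  rw [hts]
  have hpow : (1 + z) ^ (-(1/lam)) * (1 + z) ^ (r - m) = ((1 + z) ^ m)⁻¹ := by
    rw [← Real.rpow_add h1z]
    have h2 : -(1/lam) + (r - m) = -(m:ℝ) := by rw [hr]; ring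
    rw [h2, Real.rpow_neg h1z.le, Real.rpow_natCast]
  calc (1 + z) ^ (-(1/lam)) * ((dffac lam 1 m * a ^ m) * (1 + z) ^ (r - m))
      = ((1 + z) ^ (-(1/lam)) * (1 + z) ^ (r - m)) * (dffac lam 1 m * a ^ m) := by ring
    _ = ((1 + z) ^ m)⁻¹ * (dffac lam 1 m * a ^ m) := by rw [hpow]
    _ = a ^ m * dffac lam 1 m / (1 + z) ^ m := by ring
end
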